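/- arXiv:2111.03330 — 3 statements merged into one kernel-verified Lean document; each statement's English description precedes it below -/
import Mathlib

section
/- The probability that the Erdős–Rényi random graph G(n, 1/4) has a non-identity automorphism tends to 0 as n → ∞; equivalently, G(n,1/4) is asymmetric with high probability. -/
open MeasureTheory Filter

abbrev EdgeIdx (n : ℕ) := {e : Sym2 (Fin n) // ¬ e.IsDiag}

noncomputable def erMeasure (n : ℕ) : Measure (EdgeIdx n → Bool) :=
  Measure.pi fun _ => (PMF.bernoulli (1/4) (by simp)).toMeasure

def graphOf {n : ℕ} (ω : EdgeIdx n → Bool) : SimpleGraph (Fin n) where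
  Adj u v := ∃ h : u ≠ v, ω ⟨s(u,v), fun hd => h (Sym2.mk_isDiag_iff.mp hd)⟩ = true
  symm := by
    constructor
    rintro u v ⟨h, hw⟩
    refine ⟨h.symm, ?_⟩
    have he : (⟨s(v,u), fun hd => h.symm (Sym2.mk_isDiag_iff.mp hd)⟩ : EdgeIdx n)
        = ⟨s(u,v), fun hd => h (Sym2.mk_isDiag_iff.mp hd)⟩ := Subtype.ext (Sym2.eq_swap)
    rw [he]; exact hw
  loopless := by constructor; rintro v ⟨h, _⟩; exact h rfl

/-!
Let `q = p² + (1 - p)²` be the probability that two independent edge indicators agree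
(`q = 5/8` for `p = 1/4`). A permutation `f ≠ 1` of the vertices moving `k` points moves at least
`k (n - 2) / 2` edges. Among the edges moved by the induced permutation `σ` of edges one can pick a
set `D` of at least a third of them with `σ D ∩ D = ∅`; if `f` is an automorphism then
`ω e = ω (σ e)` for all `e ∈ D`, and these are `|D|` independent events of probability `q`.
Hence `f` is an automorphism with probability at most `q ^ (k ⌊(n - 2) / 6⌋)`. At most `n ^ k`
permutations move exactly `k` points, so a union bound gives `n² q ^ ⌊(n - 2) / 6⌋ → 0`.
-/

open Finset Function Topology
open scoped ENNReal NNReal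

namespace Equiv.Perm

variable {α : Type*} [Fintype α] [DecidableEq α]

theorem exists_apply_notMem_subset_support (σ : Perm α) :
    ∃ D ⊆ σ.support, (∀ x ∈ D, σ x ∉ D) ∧ #σ.support ≤ 3 * #D := by
  obtain ⟨D, hD, hmax⟩ := exists_max_image
    (σ.support.powerset.filter fun D => ∀ x ∈ D, σ x ∉ D) card ⟨∅, by simp⟩
  rw [mem_filter, mem_powerset] at hD
  refine ⟨D, hD.1, hD.2, ?_⟩
  have hcover : σ.support ⊆ D ∪ D.image σ ∪ D.image σ.symm := by
    intro x hx
    by_contra hxD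
    simp only [mem_union, mem_image, not_or, not_exists, not_and] at hxD
    have hins : insert x D ∈ σ.support.powerset.filter fun D => ∀ x ∈ D, σ x ∉ D := by
      rw [mem_filter, mem_powerset]
      refine ⟨insert_subset hx hD.1, ?_⟩
      simp only [mem_insert, forall_eq_or_imp, not_or]
      exact ⟨⟨mem_support.1 hx, fun h => hxD.2 _ h (by simp)⟩,
        fun y hy => ⟨fun h => hxD.1.2 y hy h, hD.2 y hy⟩⟩
    have := hmax _ hins
    rw [card_insert_of_notMem hxD.1.1] at this
    omega
  calc #σ.support ≤ #(D ∪ D.image σ ∪ D.image σ.symm) := card_le_card hcover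
    _ ≤ #D + #D + #D := by grw [card_union_le, card_union_le, card_image_le, card_image_le]
    _ = 3 * #D := by ring

theorem card_filter_card_support_eq_le (k : ℕ) :
    #{f : Perm α | #f.support = k} ≤ Fintype.card α ^ k := by
  calc #{f : Perm α | #f.support = k}
      ≤ #((powersetCard k univ).biUnion permsOfFinset) := by
        refine card_le_card fun f hf => mem_biUnion.2 ⟨f.support, ?_, ?_⟩
        · exact mem_powersetCard.2 ⟨subset_univ _, (mem_filter.1 hf).2⟩
        · exact mem_perms_of_finset_iff.2 fun hx => mem_support.2 hx
    _ ≤ ∑ s ∈ powersetCard k univ, #(permsOfFinset s) := card_biUnion_le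
    _ = (Fintype.card α).descFactorial k := by
        rw [sum_congr rfl fun s hs => by rw [card_perms_of_finset, (mem_powersetCard.1 hs).2],
          sum_const, card_powersetCard, card_univ, smul_eq_mul,
          Nat.descFactorial_eq_factorial_mul_choose, mul_comm]
    _ ≤ Fintype.card α ^ k := Nat.descFactorial_le_pow _ _

theorem sum_pow_card_support_le {x : ℝ≥0∞} (hx : Fintype.card α * x ≤ 1) :
    ∑ f ∈ univ.filter (· ≠ 1), x ^ #(f : Perm α).support
      ≤ Fintype.card α * (Fintype.card α * x) := by
  set n := Fintype.card α
  have hmaps : ∀ f ∈ univ.filter (· ≠ (1 : Perm α)), #f.support ∈ Icc 1 n := fun f hf =>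
    mem_Icc.2 ⟨(one_lt_card_support_of_ne_one (mem_filter.1 hf).2).le, card_le_univ _⟩
  rw [← sum_fiberwise_of_maps_to hmaps]
  calc ∑ k ∈ Icc 1 n, ∑ f ∈ univ.filter (· ≠ (1 : Perm α)) with #f.support = k,
        x ^ #f.support
      = ∑ k ∈ Icc 1 n, #{f ∈ univ.filter (· ≠ (1 : Perm α)) | #f.support = k} * x ^ k := by
        refine sum_congr rfl fun k _ => ?_
        rw [sum_congr rfl fun f hf => by rw [(mem_filter.1 hf).2], sum_const, nsmul_eq_mul]
    _ ≤ ∑ k ∈ Icc 1 n, (n * x) ^ k := by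
        refine sum_le_sum fun k _ => ?_
        rw [mul_pow]
        gcongr
        exact_mod_cast (card_le_card (filter_subset_filter _ (filter_subset _ _))).trans
          (card_filter_card_support_eq_le k)
    _ ≤ ∑ k ∈ Icc 1 n, n * x := sum_le_sum fun k hk => pow_le_of_le_one zero_le hx (by grind)
    _ = n * (n * x) := by simp

end Equiv.Perm

namespace MeasureTheory

section Pi

variable {ι κ α : Type*} [Fintype ι] [Fintype κ] [MeasurableSpace α]
  (μ : Measure α) [IsProbabilityMeasure μ]

theorem measurePreserving_comp_of_injective {g : κ → ι} (hg : Injective g) :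
    MeasurePreserving (fun ω : ι → α => ω ∘ g) (Measure.pi fun _ => μ)
      (Measure.pi fun _ => μ) := by
  classical
  let : Fintype (Set.range g) := Subtype.fintype _
  have h := (measurePreserving_piCongrLeft (fun _ : κ => μ) (Equiv.ofInjective g hg).symm).comp
    (measurePreserving_fst.comp
      (measurePreserving_piEquivPiSubtypeProd (fun _ : ι => μ) (· ∈ Set.range g)))
  convert h using 1
  ext ω k
  simp [MeasurableEquiv.piCongrLeft, Equiv.piCongrLeft, MeasurableEquiv.piEquivPiSubtypeProd]

variable [MeasurableEq α]

theorem measure_pi_forall_apply_eq_apply {a b : κ → ι} (hab : Injective (Sum.elim a b)) :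
    Measure.pi (fun _ => μ) {ω | ∀ k, ω (a k) = ω (b k)}
      = (μ.prod μ) (Set.diagonal α) ^ Fintype.card κ := by
  have hΦ : MeasurePreserving (fun ω : ι → α => fun k => (ω (a k), ω (b k)))
      (Measure.pi fun _ => μ) (Measure.pi fun _ => μ.prod μ) :=
    (measurePreserving_arrowProdEquivProdArrow α α κ (fun _ => μ) (fun _ => μ)).symm.comp
      ((measurePreserving_sumPiEquivProdPi fun _ => μ).comp
        (measurePreserving_comp_of_injective μ hab))
  have hset : {ω : ι → α | ∀ k, ω (a k) = ω (b k)}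
      = (fun ω : ι → α => fun k => (ω (a k), ω (b k))) ⁻¹'
          Set.univ.pi fun _ => Set.diagonal α := by
    ext ω; simp
  rw [hset, hΦ.measure_preimage
      (MeasurableSet.univ_pi fun _ => measurableSet_diagonal).nullMeasurableSet,
    Measure.pi_pi, prod_const, card_univ]

theorem measure_pi_comp_perm_eq_le [DecidableEq ι] (σ : Equiv.Perm ι) {m : ℕ}
    (hm : 3 * m ≤ #σ.support) :
    Measure.pi (fun _ => μ) {ω | ω ∘ σ = ω} ≤ (μ.prod μ) (Set.diagonal α) ^ m := by
  obtain ⟨D, -, hD, hcard⟩ := σ.exists_apply_notMem_subset_support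
  have hinj : Injective (Sum.elim (fun x : D => (x : ι)) (fun x : D => σ x)) := by
    rintro (x | x) (y | y) h <;> simp only [Sum.elim_inl, Sum.elim_inr] at h
    · exact congrArg _ (Subtype.ext h)
    · exact (hD y y.2 (h ▸ x.2)).elim
    · exact (hD x x.2 (h ▸ y.2)).elim
    · exact congrArg _ (Subtype.ext (σ.injective h))
  calc Measure.pi (fun _ => μ) {ω | ω ∘ σ = ω}
      ≤ Measure.pi (fun _ => μ) {ω | ∀ x : D, ω (x : ι) = ω (σ x)} :=
        measure_mono fun ω hω x => (congrFun hω x).symm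
    _ = (μ.prod μ) (Set.diagonal α) ^ #D := by
        rw [measure_pi_forall_apply_eq_apply μ hinj, Fintype.card_coe]
    _ ≤ (μ.prod μ) (Set.diagonal α) ^ m :=
        pow_le_pow_of_le_one zero_le prob_le_one (by omega)

end Pi

theorem Measure.prod_diagonal_bool (μ : Measure Bool) [SFinite μ] :
    (μ.prod μ) (Set.diagonal Bool) = μ {false} ^ 2 + μ {true} ^ 2 := by
  have : Set.diagonal Bool = {false} ×ˢ {false} ∪ {true} ×ˢ {true} := by
    ext ⟨x, y⟩; cases x <;> cases y <;> simp
  rw [this, measure_union (by simp) ((measurableSet_singleton _).prod (measurableSet_singleton _)),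
    Measure.prod_prod, Measure.prod_prod, sq, sq]

theorem Measure.prod_diagonal_bool_lt_one (μ : Measure Bool) [IsProbabilityMeasure μ]
    (h₀ : μ {false} ≠ 0) (h₁ : μ {true} ≠ 0) : (μ.prod μ) (Set.diagonal Bool) < 1 := by
  have hsum : μ {false} + μ {true} = 1 := by
    rw [← measure_union (by simp) (measurableSet_singleton _), ← measure_univ (μ := μ)]
    congr 1; ext b; cases b <;> simp
  rw [prod_diagonal_bool, ← one_pow 2, ← hsum, add_sq, add_right_comm]
  refine ENNReal.lt_add_right (by simp [ENNReal.add_eq_top, measure_ne_top]) ?_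
  simp [h₀, h₁]

end MeasureTheory

namespace ENNReal

theorem tendsto_natCast_pow_mul_pow_of_lt_one (c : ℕ) {q : ℝ≥0∞} (hq : q < 1) :
    Tendsto (fun m : ℕ => (m : ℝ≥0∞) ^ c * q ^ m) atTop (𝓝 0) := by
  lift q to ℝ≥0 using hq.ne_top
  have := ENNReal.tendsto_ofReal
    (tendsto_pow_const_mul_const_pow_of_lt_one c q.coe_nonneg (by exact_mod_cast hq))
  rw [ENNReal.ofReal_zero] at this
  refine this.congr fun m => ?_
  rw [ENNReal.ofReal_mul (by positivity), ENNReal.ofReal_pow (by positivity),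
    ENNReal.ofReal_pow q.coe_nonneg, ENNReal.ofReal_natCast, ENNReal.ofReal_coe_nnreal]

theorem tendsto_natCast_sq_mul_pow_sub_two_div_six {q : ℝ≥0∞} (hq : q < 1) :
    Tendsto (fun n : ℕ => (n : ℝ≥0∞) ^ 2 * q ^ ((n - 2) / 6)) atTop (𝓝 0) := by
  have hm : Tendsto (fun n : ℕ => (n - 2) / 6) atTop atTop :=
    (Nat.tendsto_div_const_atTop (by norm_num)).comp (tendsto_sub_atTop_nat 2)
  have h := ENNReal.Tendsto.const_mul ((tendsto_natCast_pow_mul_pow_of_lt_one 2 hq).comp hm)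
    (Or.inr (ENNReal.ofNat_ne_top (n := 196)))
  rw [mul_zero] at h
  refine tendsto_of_tendsto_of_tendsto_of_le_of_le' tendsto_const_nhds h
    (Eventually.of_forall fun _ => zero_le) ?_
  filter_upwards [eventually_ge_atTop 8] with n hn
  have hn' : n ≤ 14 * ((n - 2) / 6) := by omega
  simp only [comp_apply, ← mul_assoc]
  gcongr
  calc (n : ℝ≥0∞) ^ 2 ≤ ((14 * ((n - 2) / 6) : ℕ) : ℝ≥0∞) ^ 2 := by gcongr
    _ = 196 * (((n - 2) / 6 : ℕ) : ℝ≥0∞) ^ 2 := by push_cast; ring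

end ENNReal

section EdgePerm

variable {V : Type*}

def edgePerm (f : Equiv.Perm V) : Equiv.Perm {e : Sym2 V // ¬ e.IsDiag} where
  toFun e := ⟨e.1.map f, by rw [Sym2.isDiag_map f.injective]; exact e.2⟩
  invFun e := ⟨e.1.map f.symm, by rw [Sym2.isDiag_map f.symm.injective]; exact e.2⟩
  left_inv e := Subtype.ext (by simp [Sym2.map_map])
  right_inv e := Subtype.ext (by simp [Sym2.map_map])

theorem edgePerm_mk (f : Equiv.Perm V) {u v : V} (h : ¬ s(u, v).IsDiag) :
    edgePerm f ⟨s(u, v), h⟩ = ⟨s(f u, f v), by simpa [f.injective.eq_iff] using h⟩ := rfl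

/-- Each edge `s(u, v)` with `u` moved by `f` and `v ∉ {u, f u}` is moved, and is counted at
most twice in this way. -/
theorem card_support_mul_le_card_support_edgePerm [Fintype V] [DecidableEq V]
    (f : Equiv.Perm V) :
    #f.support * (Fintype.card V - 2) ≤ 2 * #(edgePerm f).support := by
  set s := f.support.sigma fun u => ({u, f u} : Finset V)ᶜ
  have hs : #f.support * (Fintype.card V - 2) ≤ #s := by
    rw [card_sigma, ← smul_eq_mul, ← sum_const]
    refine sum_le_sum fun u _ => ?_
    have := card_le_two (a := u) (b := f u)
    rw [card_compl]
    omega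
  have hmaps : ∀ p ∈ s, s(p.1, p.2) ∈ (edgePerm f).support.map (Embedding.subtype _) := by
    rintro ⟨u, v⟩ hp
    simp only [s, mem_sigma, mem_compl, mem_insert, mem_singleton, not_or,
      Equiv.Perm.mem_support] at hp
    refine mem_map.2 ⟨⟨s(u, v), by simpa using Ne.symm hp.2.1⟩, ?_, rfl⟩
    rw [Equiv.Perm.mem_support, edgePerm_mk, Ne, Subtype.mk.injEq, Sym2.eq_iff]
    tauto
  have hfiber : ∀ a ∈ (edgePerm f).support.map (Embedding.subtype _),
      #{p ∈ s | s(p.1, p.2) = a} ≤ 2 := by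
    intro a _
    induction a using Sym2.ind with | _ x y => ?_
    refine (card_le_card fun p hp => ?_).trans (card_le_two (a := ⟨x, y⟩) (b := ⟨y, x⟩))
    obtain ⟨u, v⟩ := p
    rw [mem_filter, Sym2.eq_iff] at hp
    rcases hp.2 with ⟨rfl, rfl⟩ | ⟨rfl, rfl⟩ <;> simp
  have := card_le_mul_card_image_of_maps_to hmaps 2 hfiber
  rw [card_map] at this
  omega

end EdgePerm

section RandomGraph

variable {n : ℕ} (μ : Measure Bool) [IsProbabilityMeasure μ]

theorem graphOf_adj_iff (ω : EdgeIdx n → Bool) {u v : Fin n} (h : ¬ s(u, v).IsDiag) :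
    (graphOf ω).Adj u v ↔ ω ⟨s(u, v), h⟩ = true :=
  ⟨fun ⟨_, hω⟩ => hω, fun hω => ⟨by simpa using h, hω⟩⟩

theorem comp_edgePerm_eq_of_adj_iff {ω : EdgeIdx n → Bool} {f : Equiv.Perm (Fin n)}
    (hf : ∀ u v, (graphOf ω).Adj (f u) (f v) ↔ (graphOf ω).Adj u v) : ω ∘ edgePerm f = ω := by
  funext ⟨e, he⟩
  induction e using Sym2.ind with | _ u v => ?_
  rw [comp_apply, edgePerm_mk, Bool.eq_iff_iff, ← graphOf_adj_iff, ← graphOf_adj_iff, hf]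

theorem measure_pi_forall_adj_iff_le (f : Equiv.Perm (Fin n)) :
    Measure.pi (fun _ : EdgeIdx n => μ)
        {ω | ∀ u v, (graphOf ω).Adj (f u) (f v) ↔ (graphOf ω).Adj u v}
      ≤ ((μ.prod μ) (Set.diagonal Bool) ^ ((n - 2) / 6)) ^ #f.support := by
  have hmoved := card_support_mul_le_card_support_edgePerm f
  rw [Fintype.card_fin] at hmoved
  have h6 := Nat.mul_le_mul_left #f.support (Nat.div_mul_le_self (n - 2) 6)
  rw [← pow_mul, mul_comm]
  exact (measure_mono fun ω => comp_edgePerm_eq_of_adj_iff).trans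
    (measure_pi_comp_perm_eq_le μ (edgePerm f) (by linarith))

theorem measure_pi_exists_adj_iff_le
    (h : n * (μ.prod μ) (Set.diagonal Bool) ^ ((n - 2) / 6) ≤ 1) :
    Measure.pi (fun _ : EdgeIdx n => μ) {ω | ∃ f : Equiv.Perm (Fin n), f ≠ 1 ∧
        ∀ u v, (graphOf ω).Adj (f u) (f v) ↔ (graphOf ω).Adj u v}
      ≤ n ^ 2 * (μ.prod μ) (Set.diagonal Bool) ^ ((n - 2) / 6) := by
  have hsub : {ω : EdgeIdx n → Bool | ∃ f : Equiv.Perm (Fin n), f ≠ 1 ∧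
        ∀ u v, (graphOf ω).Adj (f u) (f v) ↔ (graphOf ω).Adj u v}
      ⊆ ⋃ f ∈ ({f | f ≠ 1} : Finset (Equiv.Perm (Fin n))),
          {ω | ∀ u v, (graphOf ω).Adj (f u) (f v) ↔ (graphOf ω).Adj u v} := by
    rintro ω ⟨f, hf, hω⟩
    exact Set.mem_biUnion (by simpa using hf) hω
  calc _ ≤ _ := measure_mono hsub
    _ ≤ _ := measure_biUnion_finset_le _ _
    _ ≤ _ := sum_le_sum fun f _ => measure_pi_forall_adj_iff_le μ f
    _ ≤ n * (n * (μ.prod μ) (Set.diagonal Bool) ^ ((n - 2) / 6)) := by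
        simpa using Equiv.Perm.sum_pow_card_support_le (α := Fin n) (by simpa using h)
    _ = _ := by ring

theorem tendsto_measure_pi_exists_adj_iff (h₀ : μ {false} ≠ 0) (h₁ : μ {true} ≠ 0) :
    Tendsto (fun n : ℕ => Measure.pi (fun _ : EdgeIdx n => μ)
      {ω | ∃ f : Equiv.Perm (Fin n), f ≠ 1 ∧
        ∀ u v, (graphOf ω).Adj (f u) (f v) ↔ (graphOf ω).Adj u v}) atTop (𝓝 0) := by
  have hlim := ENNReal.tendsto_natCast_sq_mul_pow_sub_two_div_six
    (Measure.prod_diagonal_bool_lt_one μ h₀ h₁)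
  refine tendsto_of_tendsto_of_tendsto_of_le_of_le' tendsto_const_nhds hlim
    (Eventually.of_forall fun _ => zero_le) ?_
  filter_upwards [hlim.eventually_le_const zero_lt_one] with n hn
  refine measure_pi_exists_adj_iff_le μ (le_trans ?_ hn)
  gcongr
  exact_mod_cast Nat.le_self_pow two_ne_zero n

end RandomGraph

theorem er_asymmetric_whp :
    Tendsto (fun n : ℕ => erMeasure n {ω : EdgeIdx n → Bool |
      ∃ f : Equiv.Perm (Fin n), f ≠ Equiv.refl (Fin n) ∧
        ∀ u v, (graphOf ω).Adj (f u) (f v) ↔ (graphOf ω).Adj u v})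
      atTop (nhds 0) :=
  tendsto_measure_pi_exists_adj_iff _
    (by simp [PMF.bernoulli_apply, tsub_eq_zero_iff_le])
    (by simp [PMF.bernoulli_apply])
end

section
/- Suppose a graph G on n vertices has the property that every vertex has degree at least d and every pair of distinct vertices has at most s common neighbors, where d > s. Then every non-identity automorphism f of G moves at least d − s vertices. -/
namespace SimpleGraph

variable {V : Type*} {G : SimpleGraph V}

theorem Hom.neighborSet_diff_commonNeighbors_subset (f : G →g G) (x : V) :
    G.neighborSet x \ G.commonNeighbors x (f x) ⊆ {v | f v ≠ v} := by
  rintro v ⟨hxv, hv_not_common⟩ hfv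
  have hfxv : G.Adj (f x) v := hfv ▸ f.map_adj hxv
  exact hv_not_common ⟨hxv, hfxv⟩

theorem Iso.ncard_neighborSet_sub_ncard_commonNeighbors_le_card_support
    [Fintype V] [DecidableEq V] (φ : G ≃g G) (x : V) :
    (G.neighborSet x).ncard - (G.commonNeighbors x (φ x)).ncard ≤
      (Equiv.Perm.support φ.toEquiv).card := by
  have hsupport : {v | φ v ≠ v} = (Equiv.Perm.support φ.toEquiv : Set V) := by
    ext v
    simp
  calc (G.neighborSet x).ncard - (G.commonNeighbors x (φ x)).ncard
      ≤ (G.neighborSet x \ G.commonNeighbors x (φ x)).ncard := Set.le_ncard_sdiff _ _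
    _ ≤ {v | φ v ≠ v}.ncard :=
        Set.ncard_le_ncard (Hom.neighborSet_diff_commonNeighbors_subset φ.toHom x)
    _ = (Equiv.Perm.support φ.toEquiv).card := by rw [hsupport, Set.ncard_coe_finset]

end SimpleGraph

theorem automorphism_moves_many_vertices_general
    {V : Type*} [Fintype V] [DecidableEq V] (G : SimpleGraph V) (d s : ℕ)
    (hdeg : ∀ v : V, d ≤ (G.neighborSet v).ncard)
    (hcod : ∀ x y : V, x ≠ y → (G.commonNeighbors x y).ncard ≤ s)
    (f : Equiv.Perm V) (hf : ∀ u v, G.Adj (f u) (f v) ↔ G.Adj u v)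
    (hne : f ≠ Equiv.refl V) :
    d - s ≤ (Finset.univ.filter fun v : V => f v ≠ v).card := by
  obtain ⟨x, hx⟩ : ∃ x, f x ≠ x := by
    by_contra! hfix
    exact hne (Equiv.ext hfix)
  let φ : G ≃g G := ⟨f, hf _ _⟩
  calc d - s ≤ (G.neighborSet x).ncard - (G.commonNeighbors x (f x)).ncard :=
        tsub_le_tsub (hdeg x) (hcod x (f x) hx.symm)
    _ ≤ (Equiv.Perm.support φ.toEquiv).card :=
        SimpleGraph.Iso.ncard_neighborSet_sub_ncard_commonNeighbors_le_card_support φ x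

theorem automorphism_moves_many_vertices
    {V : Type*} [Fintype V] [DecidableEq V] (G : SimpleGraph V) (d s : ℕ) (hds : s < d)
    (hdeg : ∀ v : V, d ≤ (G.neighborSet v).ncard)
    (hcod : ∀ x y : V, x ≠ y → (G.commonNeighbors x y).ncard ≤ s)
    (f : Equiv.Perm V) (hf : ∀ u v, G.Adj (f u) (f v) ↔ G.Adj u v)
    (hne : f ≠ Equiv.refl V) :
    d - s ≤ (Finset.univ.filter fun v : V => f v ≠ v).card :=
  automorphism_moves_many_vertices_general G d s hdeg hcod f hf hne
end

section
/- The probability that the random mixed graph X(n, 1/2) is self-converse tends to zero as n → ∞. -/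
open MeasureTheory Filter

structure MixedGraph (V : Type*) where
  edge : V → V → Prop
  arc : V → V → Prop
  edge_symm : ∀ u v, edge u v → edge v u
  edge_irrefl : ∀ v, ¬ edge v v
  arc_antisymm : ∀ u v, arc u v → ¬ arc v u
  arc_edge_disjoint : ∀ u v, arc u v → ¬ edge u v

def MixedGraph.converse {V : Type*} (X : MixedGraph V) : MixedGraph V where
  edge := X.edge
  arc u v := X.arc v u
  edge_symm := X.edge_symm
  edge_irrefl := X.edge_irrefl
  arc_antisymm u v h h' := X.arc_antisymm v u h h'
  arc_edge_disjoint u v h he := X.arc_edge_disjoint v u h (X.edge_symm u v he)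

def IsMixedIso {V W : Type*} (f : V ≃ W) (X : MixedGraph V) (Y : MixedGraph W) : Prop :=
  (∀ u v, X.edge u v ↔ Y.edge (f u) (f v)) ∧ (∀ u v, X.arc u v ↔ Y.arc (f u) (f v))

def MixedGraph.SelfConverse {V : Type*} (X : MixedGraph V) : Prop :=
  ∃ f : V ≃ V, IsMixedIso f X X.converse

def MixedGraph.symGraph {V : Type*} (X : MixedGraph V) : SimpleGraph V where
  Adj := X.edge
  symm := ⟨fun u v => X.edge_symm u v⟩
  loopless := ⟨X.edge_irrefl⟩

noncomputable def mixedMeasure (n : ℕ) : Measure ((Fin n × Fin n) → Bool) :=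
  Measure.pi fun _ => (PMF.bernoulli (1/2) (by norm_num)).toMeasure

def mixedOf {n : ℕ} (ω : Fin n × Fin n → Bool) : MixedGraph (Fin n) where
  edge u v := u ≠ v ∧ ω (u,v) = true ∧ ω (v,u) = true
  arc u v := u ≠ v ∧ ω (u,v) = true ∧ ω (v,u) = false
  edge_symm := by tauto
  edge_irrefl := by tauto
  arc_antisymm := by rintro u v ⟨_, _, h⟩ ⟨_, h', _⟩; simp [h] at h'
  arc_edge_disjoint := by rintro u v ⟨_, _, h⟩ ⟨_, _, h'⟩; simp [h] at h'

/-!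
If `f` is an isomorphism from `mixedOf ω` to its converse, then `ω (f u, f v) = ω (v, u)` for
`u ≠ v`: the bit pattern `ω` is invariant under the permutation `(v, u) ↦ (f u, f v)` of the
off-diagonal pairs, and hence constant on its cycles. Apart from at most `n` fixed points these
cycles have length at least `2`, so at most `2 ^ ((n² + 2n) / 2)` of the `2 ^ n²` equally likely
patterns are invariant. A union bound over the `n!` choices of `f` leaves a probability of at
most `n! 2 ^ (n - n² / 2)`, which tends to `0`.
-/

open Finset Equiv
open scoped ENNReal Nat

namespace Equiv.Perm

variable {α β : Type*} {g : Perm α}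

theorem SameCycle.apply_eq_of_invariant {ω : α → β} (hω : ∀ x, ω (g x) = ω x) {x y : α}
    (h : SameCycle g x y) : ω x = ω y := by
  obtain ⟨i, rfl⟩ := h
  induction i using Int.induction_on generalizing x with
  | zero => simp
  | succ i ih => rw [zpow_add_one, mul_apply, ← ih, hω]
  | pred i ih =>
    rw [zpow_sub_one, mul_apply, ← ih, ← hω (g⁻¹ x), ← mul_apply, mul_inv_cancel,
      one_apply]

variable (β g) in
def invariantFunEquiv :
    {ω : α → β // ∀ x, ω (g x) = ω x} ≃ (Quotient (SameCycle.setoid g) → β) where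
  toFun ω := Quotient.lift ω.1 fun _ _ => SameCycle.apply_eq_of_invariant ω.2
  invFun k := ⟨k ∘ Quotient.mk _,
    fun _ => congrArg k (Quotient.sound (sameCycle_apply_left.2 .rfl))⟩
  left_inv _ := rfl
  right_inv _ := funext fun c => Quotient.inductionOn c fun _ => rfl

theorem natCard_invariantFun [Finite α] (g : Perm α) :
    Nat.card {ω : α → β // ∀ x, ω (g x) = ω x} =
      Nat.card β ^ Nat.card (Quotient (SameCycle.setoid g)) := by
  rw [Nat.card_congr (invariantFunEquiv β g), Nat.card_fun]

/-- A cycle either is a fixed point or has at least two elements. -/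
theorem two_mul_natCard_quotient_sameCycle_le [Fintype α] [DecidableEq α] (g : Perm α) :
    2 * Nat.card (Quotient (SameCycle.setoid g)) ≤ Fintype.card α + #{x | g x = x} := by
  classical
  let cls : α → Quotient (SameCycle.setoid g) := Quotient.mk _
  have hfiber (x : α) : 2 ≤ #{y | cls y = cls x} + #{y ∈ {y | g y = y} | cls y = cls x} := by
    by_cases hx : g x = x
    · have h1 : 1 ≤ #{y | cls y = cls x} := card_pos.2 ⟨x, by simp⟩
      have h2 : 1 ≤ #{y ∈ {y | g y = y} | cls y = cls x} := card_pos.2 ⟨x, by simp [hx]⟩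
      omega
    · have hpair : {g x, x} ⊆ ({y | cls y = cls x} : Finset α) := by
        intro y hy
        rcases mem_insert.1 hy with rfl | hy
        · simpa [cls] using Quotient.sound (sameCycle_apply_left.2 .rfl)
        · simp [mem_singleton.1 hy]
      have := card_le_card hpair
      rw [card_pair hx] at this
      omega
  calc 2 * Nat.card (Quotient (SameCycle.setoid g))
      = ∑ _c : Quotient (SameCycle.setoid g), 2 := by
        rw [sum_const, card_univ, smul_eq_mul, mul_comm, Nat.card_eq_fintype_card]
    _ ≤ ∑ c, (#{x | cls x = c} + #{x ∈ {x | g x = x} | cls x = c}) := sum_le_sum fun c _ => by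
        obtain ⟨x, rfl⟩ := Quotient.mk_surjective c
        exact hfiber x
    _ = Fintype.card α + #{x | g x = x} := by
        rw [sum_add_distrib, ← card_univ,
          card_eq_sum_card_fiberwise (fun x _ => mem_univ (cls x)),
          card_eq_sum_card_fiberwise (fun x _ => mem_univ (cls x)) (s := {x | g x = x})]

end Equiv.Perm

section FlipOffDiag

variable {V : Type*} [DecidableEq V]

-- The diagonal is fixed because `mixedOf ω` ignores `ω` there.
def flipOffDiag (f : Perm V) : Perm (V × V) where
  toFun p := if p.1 = p.2 then p else (f p.2, f p.1)
  invFun p := if p.1 = p.2 then p else (f.symm p.2, f.symm p.1)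
  left_inv p := by
    by_cases h : p.1 = p.2
    · simp [h]
    · simp [h, Ne.symm h]
  right_inv p := by
    by_cases h : p.1 = p.2
    · simp [h]
    · simp [h, Ne.symm h]

theorem flipOffDiag_apply_of_ne (f : Perm V) {p : V × V} (h : p.1 ≠ p.2) :
    flipOffDiag f p = (f p.2, f p.1) := if_neg h

theorem card_fixed_flipOffDiag_le [Fintype V] (f : Perm V) :
    #{p | flipOffDiag f p = p} ≤ 2 * Fintype.card V := by
  have hsub : ({p | flipOffDiag f p = p} : Finset (V × V)) ⊆
      univ.image (fun v => (v, v)) ∪ univ.image (fun v => (f v, v)) := by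
    intro p hp
    by_cases h : p.1 = p.2
    · exact mem_union_left _ (mem_image.2 ⟨p.1, mem_univ _, Prod.ext rfl h⟩)
    · rw [mem_filter, flipOffDiag_apply_of_ne f h] at hp
      exact mem_union_right _
        (mem_image.2 ⟨p.2, mem_univ _, Prod.ext (congrArg Prod.fst hp.2 :) rfl⟩)
  calc #{p | flipOffDiag f p = p}
      ≤ #(univ.image (fun v => (v, v))) + #(univ.image (fun v => (f v, v))) :=
        (card_le_card hsub).trans (card_union_le _ _)
    _ ≤ #(univ : Finset V) + #(univ : Finset V) := add_le_add card_image_le card_image_le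
    _ = 2 * Fintype.card V := by rw [card_univ, two_mul]

theorem natCard_flipOffDiag_invariant_sq_le [Fintype V] (f : Perm V) :
    Nat.card {ω : V × V → Bool // ∀ p, ω (flipOffDiag f p) = ω p} ^ 2 ≤
      2 ^ (Fintype.card V * Fintype.card V + 2 * Fintype.card V) := by
  rw [Perm.natCard_invariantFun, Nat.card_eq_fintype_card (α := Bool), Fintype.card_bool,
    ← pow_mul, mul_comm]
  refine Nat.pow_le_pow_right two_pos ?_
  have := Perm.two_mul_natCard_quotient_sameCycle_le (flipOffDiag f)
  have := card_fixed_flipOffDiag_le f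
  rw [Fintype.card_prod] at *
  omega

end FlipOffDiag

theorem isMixedIso_mixedOf_converse_iff {n : ℕ} (f : Perm (Fin n))
    (ω : Fin n × Fin n → Bool) :
    IsMixedIso f (mixedOf ω) (mixedOf ω).converse ↔ ∀ p, ω (flipOffDiag f p) = ω p := by
  constructor
  · rintro ⟨hedge, harc⟩ ⟨u, v⟩
    by_cases huv : u = v
    · simp [flipOffDiag, huv]
    have h1 := hedge u v
    have h2 := harc u v
    have h3 := harc v u
    simp only [mixedOf, MixedGraph.converse, f.injective.ne_iff, Ne, huv, eq_comm (a := v),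
      not_false_eq_true, true_and] at h1 h2 h3
    rw [flipOffDiag_apply_of_ne f huv]
    revert h1 h2 h3
    cases ω (u, v) <;> cases ω (v, u) <;> cases ω (f u, f v) <;> cases ω (f v, f u) <;> simp
  · intro h
    refine ⟨fun u v => ?_, fun u v => ?_⟩ <;>
    · have h1 := h (u, v)
      have h2 := h (v, u)
      by_cases huv : u = v
      · simp [mixedOf, MixedGraph.converse, huv]
      rw [flipOffDiag_apply_of_ne f huv] at h1
      rw [flipOffDiag_apply_of_ne f (Ne.symm huv)] at h2
      simp only [mixedOf, MixedGraph.converse, f.injective.ne_iff, h1, h2]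
      have hvu := Ne.symm huv
      tauto

theorem mixedMeasure_eq_smul_count (n : ℕ) :
    mixedMeasure n = ((2 : ℝ≥0∞) ^ (n * n))⁻¹ • Measure.count := by
  refine Measure.ext_of_singleton fun ω => ?_
  have hset : ({ω} : Set (Fin n × Fin n → Bool)) = Set.univ.pi fun i => {ω i} := by
    ext x
    simp [Set.mem_pi, funext_iff]
  have hbit (b : Bool) : (PMF.bernoulli (1/2) (by norm_num)).toMeasure {b} = 2⁻¹ := by
    rw [PMF.toMeasure_apply_singleton _ _ (measurableSet_singleton _)]
    cases b <;> simp [PMF.bernoulli_apply]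
  rw [mixedMeasure, hset, Measure.pi_pi, ← hset]
  simp only [hbit, prod_const, card_univ, Fintype.card_prod, Fintype.card_fin, Measure.smul_apply,
    Measure.count_singleton, smul_eq_mul, mul_one, ENNReal.inv_pow]

theorem mixedMeasure_apply (n : ℕ) (s : Set (Fin n × Fin n → Bool)) :
    mixedMeasure n s = Nat.card s / 2 ^ (n * n) := by
  rw [mixedMeasure_eq_smul_count, Measure.smul_apply, Measure.count_apply_finite s s.toFinite,
    Nat.card_eq_card_finite_toFinset s.toFinite, smul_eq_mul, ENNReal.div_eq_inv_mul]

theorem eventually_mul_sq_le_two_pow (c : ℕ) : ∀ᶠ n : ℕ in atTop, c * n ^ 2 ≤ 2 ^ n := by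
  have hc : (0 : ℝ) < (c + 1 : ℝ)⁻¹ := by positivity
  filter_upwards [(tendsto_order.1 (tendsto_pow_const_div_const_pow_of_one_lt 2 one_lt_two)).2 _ hc]
    with n hn
  rw [div_lt_iff₀ (by positivity), inv_mul_eq_div, lt_div_iff₀ (by positivity)] at hn
  have hreal : ((c : ℝ) + 1) * n ^ 2 < 2 ^ n := by linarith
  have : (c + 1) * n ^ 2 < 2 ^ n := by exact_mod_cast hreal
  nlinarith

theorem factorial_mul_mul_two_pow_le {n N : ℕ} (hN : N ^ 2 ≤ 2 ^ (n * n + 2 * n))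
    (hn : 16 * n ^ 2 ≤ 2 ^ n) : n ! * N * 2 ^ n ≤ 2 ^ (n * n) := by
  rw [← Nat.pow_le_pow_iff_left two_ne_zero]
  calc (n ! * N * 2 ^ n) ^ 2 = (n !) ^ 2 * N ^ 2 * 2 ^ (2 * n) := by ring
    _ ≤ (n ^ n) ^ 2 * 2 ^ (n * n + 2 * n) * 2 ^ (2 * n) := by gcongr; exact n.factorial_le_pow
    _ = (16 * n ^ 2) ^ n * 2 ^ (n * n) := by
        rw [mul_pow, show 16 ^ n = 2 ^ (4 * n) by rw [pow_mul]; rfl]; ring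
    _ ≤ (2 ^ n) ^ n * 2 ^ (n * n) := by gcongr
    _ = (2 ^ (n * n)) ^ 2 := by ring

theorem mixedMeasure_invariant_flipOffDiag_le {n : ℕ} (hn : 16 * n ^ 2 ≤ 2 ^ n)
    (f : Perm (Fin n)) :
    mixedMeasure n {ω | ∀ p, ω (flipOffDiag f p) = ω p} ≤
      ((n ! * 2 ^ n : ℕ) : ℝ≥0∞)⁻¹ := by
  set N := Nat.card {ω : Fin n × Fin n → Bool // ∀ p, ω (flipOffDiag f p) = ω p}
  have hN : N * (n ! * 2 ^ n) ≤ 2 ^ (n * n) := by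
    have := factorial_mul_mul_two_pow_le
      (by simpa only [Fintype.card_fin] using natCard_flipOffDiag_invariant_sq_le f) hn
    linarith
  rw [mixedMeasure_apply, ENNReal.le_inv_iff_mul_le, ← ENNReal.mul_div_right_comm]
  refine ENNReal.div_le_of_le_mul ?_
  rw [one_mul]
  exact_mod_cast hN

theorem mixedMeasure_selfConverse_le {n : ℕ} (hn : 16 * n ^ 2 ≤ 2 ^ n) :
    mixedMeasure n {ω | (mixedOf ω).SelfConverse} ≤ 2⁻¹ ^ n := by
  have hsub : {ω | (mixedOf ω).SelfConverse} ⊆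
      ⋃ f : Perm (Fin n), {ω | ∀ p, ω (flipOffDiag f p) = ω p} :=
    fun ω ⟨f, hf⟩ => Set.mem_iUnion.2 ⟨f, (isMixedIso_mixedOf_converse_iff f ω).1 hf⟩
  have hfact : (n ! : ℝ≥0∞) ≠ 0 := by exact_mod_cast n.factorial_ne_zero
  calc mixedMeasure n {ω | (mixedOf ω).SelfConverse}
      ≤ ∑ f : Perm (Fin n), mixedMeasure n {ω | ∀ p, ω (flipOffDiag f p) = ω p} :=
        (measure_mono hsub).trans (measure_iUnion_fintype_le _ _)
    _ ≤ ∑ _f : Perm (Fin n), ((n ! * 2 ^ n : ℕ) : ℝ≥0∞)⁻¹ :=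
        sum_le_sum fun f _ => mixedMeasure_invariant_flipOffDiag_le hn f
    _ = 2⁻¹ ^ n := by
        rw [sum_const, card_univ, Fintype.card_perm, Fintype.card_fin, nsmul_eq_mul, Nat.cast_mul,
          ENNReal.mul_inv (.inl hfact) (.inr (by simp)), ← mul_assoc,
          ENNReal.mul_inv_cancel hfact (ENNReal.natCast_ne_top _), one_mul, Nat.cast_pow,
          Nat.cast_ofNat, ENNReal.inv_pow]

theorem random_mixed_graph_selfConverse_tendsto_zero :
    Tendsto (fun n : ℕ => mixedMeasure n
      {ω : Fin n × Fin n → Bool | (mixedOf ω).SelfConverse}) atTop (nhds 0) :=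
  tendsto_of_tendsto_of_tendsto_of_le_of_le' tendsto_const_nhds
    (ENNReal.tendsto_pow_atTop_nhds_zero_of_lt_one (ENNReal.inv_lt_one.2 (by norm_num)))
    (.of_forall fun _ => zero_le)
    ((eventually_mul_sq_le_two_pow 16).mono fun _ => mixedMeasure_selfConverse_le)
end
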